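/- arXiv:1312.2200 — 2 statements merged into one kernel-verified Lean document; each statement's English description precedes it below -/
import Mathlib

section
/- Let m, n, h ∈ ℕ with 0 < h ≤ min(m,n) and r = m+n−2h, and let ε_i^j = ε_i^j(m,n,h) be the EPOSIC coefficients. Then for every 0 ≤ i ≤ r there exist indices j₁ < j₂ with 0 ≤ j₁, j₂ ≤ n such that ε_i^{j₁} ≠ 0 and ε_i^{j₂} ≠ 0. -/
open scoped BigOperators Matrix
open Matrix

/-- Binomial coefficient `C(a, b)` with an integer lower argument (zero if `b < 0`),
as a real number. -/
noncomputable def Cb (a : ℕ) (b : ℤ) : ℝ :=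
  if 0 ≤ b then (a.choose b.toNat : ℝ) else 0

/-- The coefficient `β_{i,s,j}` of the EPOSIC channel `Φ_{m,n,h}`. -/
noncomputable def epsBeta (m n h : ℕ) (i s j : ℤ) : ℝ :=
  ((-1 : ℝ) ^ s * Cb h s * Cb (n - h) (j - s) * Cb (m - h) (i - j + s)) /
    Real.sqrt (Cb (m + n - 2 * h) i * Cb m (i - j + h) * Cb n j *
      ∑ k ∈ Finset.range (h + 1),
        (h.choose k : ℝ) ^ 2 / ((m.choose (h - k) : ℝ) * (n.choose k : ℝ)))

/-- The coefficient `ε_i^j = ε_i^j(m,n,h)` of the EPOSIC channel `Φ_{m,n,h}`. -/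
noncomputable def eps (m n h : ℕ) (i j : ℤ) : ℝ :=
  ∑ s ∈ Finset.Icc (max 0 (max (j - i) (j + h - n)))
      (min (h : ℤ) (min j (j + m - i - h))),
    epsBeta m n h i s j

/-- The `j`-th EPOSIC Kraus operator of `Φ_{m,n,h}`: the `(m+1) × (r+1)` matrix
(`r = m + n - 2h`) whose `(i - j + h, i)` entry is `ε_i^j` for
`max{0, j-h} ≤ i ≤ min{r, m-h+j}`, all other entries being `0`. -/
noncomputable def kraus (m n h j : ℕ) : Matrix (Fin (m + 1)) (Fin (m + n - 2 * h + 1)) ℂ :=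
  Matrix.of fun l i =>
    if (l : ℤ) = (i : ℤ) - j + h ∧ max 0 ((j : ℤ) - h) ≤ (i : ℤ) ∧
        (i : ℤ) ≤ min ((m : ℤ) + n - 2 * h) ((m : ℤ) - h + j)
      then ((eps m n h i j : ℝ) : ℂ) else 0

/-- The EPOSIC channel `Φ_{m,n,h}`. -/
noncomputable def eposic (m n h : ℕ)
    (A : Matrix (Fin (m + n - 2 * h + 1)) (Fin (m + n - 2 * h + 1)) ℂ) :
    Matrix (Fin (m + 1)) (Fin (m + 1)) ℂ :=
  ∑ j ∈ Finset.range (n + 1), kraus m n h j * A * (kraus m n h j)ᴴ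

/-!
At the two extreme indices `j₁ = max 0 (i - m + h)` and `j₂ = min n (i + h)` the summation range
of `ε_i^j` collapses to the single index `s = 0`, respectively `s = h`. In both cases every
binomial coefficient of the surviving term `β_{i,s,j}` has its lower argument in range, so
`ε_i^j = β_{i,s,j} ≠ 0`; and `j₁ < j₂` because `h > 0`.
-/

lemma Cb_pos {a : ℕ} {b : ℤ} (hb₀ : 0 ≤ b) (hba : b ≤ a) : 0 < Cb a b := by
  rw [Cb, if_pos hb₀]
  exact_mod_cast Nat.choose_pos (by omega)

lemma sum_choose_sq_div_choose_mul_choose_pos (m : ℕ) {n h : ℕ} (hn : h ≤ n) :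
    0 < ∑ k ∈ Finset.range (h + 1),
      (h.choose k : ℝ) ^ 2 / ((m.choose (h - k) : ℝ) * (n.choose k : ℝ)) := by
  refine Finset.sum_pos' (fun k _ => by positivity) ⟨h, Finset.self_mem_range_succ h, ?_⟩
  have := Nat.choose_pos hn
  simp only [Nat.choose_self, Nat.sub_self, Nat.choose_zero_right, Nat.cast_one, one_pow, one_mul]
  positivity

section Endpoints

variable {m n h : ℕ}

lemma epsBeta_ne_zero {i s j : ℤ}
    (hi₀ : 0 ≤ i) (hir : i ≤ (m : ℤ) + n - 2 * h) (hs₀ : 0 ≤ s) (hsh : s ≤ h)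
    (hjs₀ : 0 ≤ j - s) (hjsn : j - s ≤ (n : ℤ) - h)
    (hijs₀ : 0 ≤ i - j + s) (hijsm : i - j + s ≤ (m : ℤ) - h) :
    epsBeta m n h i s j ≠ 0 := by
  rw [epsBeta]
  refine div_ne_zero ?_ (Real.sqrt_pos.2 ?_).ne'
  · have c₁ := Cb_pos (a := h) hs₀ hsh
    have c₂ := Cb_pos (a := n - h) hjs₀ (by omega)
    have c₃ := Cb_pos (a := m - h) hijs₀ (by omega)
    have : (-1 : ℝ) ^ s ≠ 0 := zpow_ne_zero s (by norm_num)
    exact mul_ne_zero (mul_ne_zero (mul_ne_zero this c₁.ne') c₂.ne') c₃.ne'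
  · have c₁ := Cb_pos (a := m + n - 2 * h) hi₀ (by omega)
    have c₂ := Cb_pos (a := m) (b := i - j + h) (by omega) (by omega)
    have c₃ := Cb_pos (a := n) (b := j) (by omega) (by omega)
    have := sum_choose_sq_div_choose_mul_choose_pos m (n := n) (h := h) (by omega)
    positivity

lemma eps_eq_epsBeta_of_bounds_eq {i j s : ℤ}
    (hlo : max 0 (max (j - i) (j + h - n)) = s) (hhi : min (h : ℤ) (min j (j + m - i - h)) = s) :
    eps m n h i j = epsBeta m n h i s j := by
  rw [eps, hlo, hhi, Finset.Icc_self, Finset.sum_singleton]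

lemma eps_max_ne_zero (hm : h ≤ m) (hn : h ≤ n) {i : ℤ}
    (hi₀ : 0 ≤ i) (hir : i ≤ (m : ℤ) + n - 2 * h) :
    eps m n h i (max 0 (i - m + h)) ≠ 0 := by
  rw [eps_eq_epsBeta_of_bounds_eq (s := 0) (by omega) (by omega)]
  exact epsBeta_ne_zero hi₀ hir le_rfl
    (by omega) (by omega) (by omega) (by omega) (by omega)

lemma eps_min_ne_zero (hm : h ≤ m) (hn : h ≤ n) {i : ℤ}
    (hi₀ : 0 ≤ i) (hir : i ≤ (m : ℤ) + n - 2 * h) :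
    eps m n h i (min n (i + h)) ≠ 0 := by
  rw [eps_eq_epsBeta_of_bounds_eq (s := h) (by omega) (by omega)]
  exact epsBeta_ne_zero hi₀ hir (by omega) le_rfl
    (by omega) (by omega) (by omega) (by omega)

end Endpoints

theorem stmt4 (m n h : ℕ) (h0 : 0 < h) (hh : h ≤ min m n) :
    ∀ i : ℤ, 0 ≤ i → i ≤ (m : ℤ) + n - 2 * h →
      ∃ j₁ j₂ : ℤ, j₁ < j₂ ∧ 0 ≤ j₁ ∧ j₁ ≤ n ∧ 0 ≤ j₂ ∧ j₂ ≤ n ∧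
        eps m n h i j₁ ≠ 0 ∧ eps m n h i j₂ ≠ 0 := by
  intro i hi₀ hir
  have hm : h ≤ m := hh.trans (min_le_left m n)
  have hn : h ≤ n := hh.trans (min_le_right m n)
  exact ⟨max 0 (i - m + h), min n (i + h), by omega, by omega, by omega, by omega, by omega,
    eps_max_ne_zero hm hn hi₀ hir, eps_min_ne_zero hm hn hi₀ hir⟩
end

section
/- Let m ∈ ℕ with m ≥ 1, let T_0, T_1 be the EPOSIC Kraus operators of Φ_{m,1,1}, and let w ∈ ℂ^m be a unit vector. Set u_0 = T_0 w, u_1 = T_1 w and R = ‖u_0‖²‖u_1‖² − |⟨u_0, u_1⟩|². Then 0 ≤ 1 − 4R ≤ 1, and the (m+1)×(m+1) Hermitian matrix Φ_{m,1,1}(ww*) = T_0 ww* T_0* + T_1 ww* T_1* has eigenvalues (1 + sqrt(1−4R))/2 and (1 − sqrt(1−4R))/2, together with the eigenvalue 0 with multiplicity m−1. -/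
open scoped BigOperators Matrix
open Matrix

/-- The pure state `w w*` associated to a vector `w`. -/
noncomputable def pureState {d : ℕ} (w : EuclideanSpace ℂ (Fin d)) :
    Matrix (Fin d) (Fin d) ℂ :=
  Matrix.of fun i j => w i * (starRingEnd ℂ) (w j)

open scoped Classical in
/-- The von Neumann entropy (base-2) of a matrix: `-∑ λᵢ log₂ λᵢ` over its eigenvalues
if it is Hermitian, and `0` otherwise.  (Note `Real.logb 2 0 = 0`, giving the
convention `0 · log₂ 0 = 0`.) -/
noncomputable def entropy {d : ℕ} (ρ : Matrix (Fin d) (Fin d) ℂ) : ℝ :=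
  if h : ρ.IsHermitian then -∑ i, h.eigenvalues i * Real.logb 2 (h.eigenvalues i) else 0

/-- The minimal output entropy of a channel: the infimum of the entropies of the outputs
of pure-state inputs. -/
noncomputable def Smin {d e : ℕ}
    (Φ : Matrix (Fin d) (Fin d) ℂ → Matrix (Fin e) (Fin e) ℂ) : ℝ :=
  sInf {x | ∃ w : EuclideanSpace ℂ (Fin d), ‖w‖ = 1 ∧ x = entropy (Φ (pureState w))}

/-- For a vector `w` in the domain of `Φ_{m,1,1}`, with `u₀ = T₀ w` and `u₁ = T₁ w`
(the images of `w` under the two EPOSIC Kraus operators of `Φ_{m,1,1}`), the quantity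
`R(w) = ‖u₀‖² ‖u₁‖² - |⟨u₀, u₁⟩|²`. -/
noncomputable def Rval (m : ℕ) (w : EuclideanSpace ℂ (Fin (m + 1 - 2 * 1 + 1))) : ℝ :=
  (∑ i, Complex.normSq ((kraus m 1 1 0).mulVec (fun i => w i) i)) *
      (∑ i, Complex.normSq ((kraus m 1 1 1).mulVec (fun i => w i) i)) -
    Complex.normSq (∑ i, (starRingEnd ℂ) ((kraus m 1 1 0).mulVec (fun i => w i) i) *
      ((kraus m 1 1 1).mulVec (fun i => w i) i))

/-!
For `h = n = 1` the Kraus operator `T₀` is supported on the subdiagonal and `T₁` on the diagonal,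
with `(ε_i^0)² = (i+1)/(m+1)` and `(ε_i^1)² = (m-i)/(m+1)`; hence `T₀*T₀ + T₁*T₁ = I`. The output
`Φ(ww*) = u₀u₀* + u₁u₁*` is then positive semidefinite of rank at most two, with trace
`‖u₀‖² + ‖u₁‖² = ‖w‖² = 1` and `tr Φ(ww*)² = ‖u₀‖⁴ + ‖u₁‖⁴ + 2|⟨u₀, u₁⟩|² = 1 - 2R`. So its only
possibly nonzero eigenvalues `λ₁ ≥ λ₂ ≥ 0` satisfy `λ₁ + λ₂ = 1` and `λ₁λ₂ = R`: they are the roots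
of `x² - x + R`.
-/

open scoped ComplexOrder

def shiftedDiagonal {R : Type*} [Zero R] {a b : ℕ} (k : ℕ) (c : Fin b → R) :
    Matrix (Fin a) (Fin b) R :=
  of fun l i => if (l : ℕ) = i + k then c i else 0

theorem conjTranspose_shiftedDiagonal_mul_self {R : Type*} [Semiring R] [StarRing R]
    {a b k : ℕ} (hk : b + k ≤ a) (c : Fin b → R) :
    (shiftedDiagonal (a := a) k c)ᴴ * shiftedDiagonal (a := a) k c =
      diagonal fun i => star (c i) * c i := by
  ext i i'
  rw [mul_apply, Finset.sum_eq_single ⟨i + k, by omega⟩]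
  · by_cases h : i = i' <;> simp [shiftedDiagonal, h, Fin.val_eq_val]
  · intro l _ hl
    simp only [shiftedDiagonal, conjTranspose_apply, of_apply, if_neg fun h => hl (Fin.ext h),
      star_zero, zero_mul]
  · simp

theorem star_mulVec_dotProduct_mulVec {R m n : Type*} [CommSemiring R] [StarRing R]
    [Fintype m] [Fintype n] (T : Matrix m n R) (w : n → R) :
    star (T *ᵥ w) ⬝ᵥ (T *ᵥ w) = star w ⬝ᵥ (Tᴴ * T) *ᵥ w := by
  rw [star_mulVec, ← dotProduct_mulVec, mulVec_mulVec]

theorem EuclideanSpace.star_dotProduct_self_of_norm_eq_one {n : Type*} [Fintype n]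
    {w : EuclideanSpace ℂ n} (hw : ‖w‖ = 1) : star (fun i => w i) ⬝ᵥ (fun i => w i) = 1 := by
  have hinner := inner_self_eq_norm_sq_to_K (𝕜 := ℂ) w
  rw [hw, EuclideanSpace.inner_eq_star_dotProduct, dotProduct_comm] at hinner
  simpa using hinner

theorem star_dotProduct_self_eq_sum_normSq {n : Type*} [Fintype n] (u : n → ℂ) :
    star u ⬝ᵥ u = ((∑ i, Complex.normSq (u i) : ℝ) : ℂ) := by
  push_cast
  exact Finset.sum_congr rfl fun i _ => Complex.normSq_eq_conj_mul_self.symm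

theorem rank_vecMulVec_add_vecMulVec_le {K m n : Type*} [Field K] [Fintype m] [Fintype n]
    (u v : m → K) (x y : n → K) : (vecMulVec u x + vecMulVec v y).rank ≤ 2 := by
  have hfactor : vecMulVec u x + vecMulVec v y = (of ![u, v])ᵀ * of ![x, y] := by
    ext
    simp [mul_apply, vecMulVec_apply]
  rw [hfactor]
  exact (rank_mul_le_left _ _).trans ((rank_le_card_width _).trans (by simp))

theorem trace_vecMulVec_add_vecMulVec_sq {R n : Type*} [CommRing R] [StarRing R] [Fintype n]
    (u v : n → R) :
    ((vecMulVec u (star u) + vecMulVec v (star v)) *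
        (vecMulVec u (star u) + vecMulVec v (star v))).trace =
      (star u ⬝ᵥ u) ^ 2 + (star v ⬝ᵥ v) ^ 2 + 2 * ((star u ⬝ᵥ v) * (star v ⬝ᵥ u)) := by
  simp only [add_mul, mul_add, vecMulVec_mul_vecMulVec, trace_add, trace_vecMulVec,
    dotProduct_smul, smul_eq_mul]
  simp only [dotProduct_comm u (star u), dotProduct_comm v (star u), dotProduct_comm u (star v),
    dotProduct_comm v (star v)]
  ring

theorem Matrix.IsHermitian.trace_mul_self_eq_sum_sq_eigenvalues {𝕜 n : Type*} [RCLike 𝕜]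
    [Fintype n] [DecidableEq n] {A : Matrix n n 𝕜} (hA : A.IsHermitian) :
    (A * A).trace = ∑ i, ((hA.eigenvalues i ^ 2 : ℝ) : 𝕜) := by
  conv_lhs => rw [hA.spectral_theorem, ← map_mul, Unitary.conjStarAlgAut_apply, trace_mul_cycle,
    Unitary.coe_star_mul_self, one_mul, diagonal_mul_diagonal, trace_diagonal]
  simp [sq]

theorem Fin.eq_zero_of_antitone_of_card_ne_zero_le {n k : ℕ} {f : Fin n → ℝ} (hf : Antitone f)
    (hf0 : ∀ i, 0 ≤ f i) (hk : Fintype.card {i // f i ≠ 0} ≤ k) {i : Fin n} (hi : k ≤ i) :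
    f i = 0 := by
  by_contra hfi
  have hsub : Finset.Iic i ⊆ Finset.univ.filter (f · ≠ 0) := fun j hj => by
    simp only [Finset.mem_Iic] at hj
    simpa only [ne_eq, Finset.mem_filter, Finset.mem_univ, true_and] using ((lt_of_le_of_ne (hf0 i) (Ne.symm hfi)).trans_le (hf hj)).ne'
  have hcard := Finset.card_le_card hsub
  rw [Fin.card_Iic, ← Fintype.card_subtype] at hcard
  omega

theorem eq_roots_of_add_eq_one_of_sq_add_sq {x y R : ℝ} (hsum : x + y = 1)
    (hsq : x ^ 2 + y ^ 2 = 1 - 2 * R) (hy : 0 ≤ y) (hyx : y ≤ x) :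
    0 ≤ 1 - 4 * R ∧ 1 - 4 * R ≤ 1 ∧
      x = (1 + √(1 - 4 * R)) / 2 ∧ y = (1 - √(1 - 4 * R)) / 2 := by
  have hdisc : 1 - 4 * R = (x - y) ^ 2 := by nlinarith
  have hsqrt : √(1 - 4 * R) = x - y := by rw [hdisc, Real.sqrt_sq (by linarith)]
  refine ⟨hdisc ▸ sq_nonneg _, by nlinarith, ?_, ?_⟩ <;> rw [hsqrt] <;> linarith

theorem Matrix.PosSemidef.eigenvalues_of_rank_le_two {𝕜 : Type*} [RCLike 𝕜] {n : ℕ}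
    (hn : 2 ≤ n) {A : Matrix (Fin n) (Fin n) 𝕜} (hA : A.PosSemidef) (hrank : A.rank ≤ 2)
    {R : ℝ} (htr : A.trace = 1) (htr2 : (A * A).trace = ((1 - 2 * R : ℝ) : 𝕜)) :
    0 ≤ 1 - 4 * R ∧ 1 - 4 * R ≤ 1 ∧
      ∃ σ : Equiv.Perm (Fin n), ∀ i : Fin n, hA.isHermitian.eigenvalues (σ i) =
        if (i : ℕ) = 0 then (1 + √(1 - 4 * R)) / 2
        else if (i : ℕ) = 1 then (1 - √(1 - 4 * R)) / 2
        else 0 := by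
  set e := hA.isHermitian.eigenvalues
  obtain ⟨σ, hanti⟩ : ∃ σ : Equiv.Perm (Fin n), Antitone (e ∘ σ) :=
    ⟨_, monotone_toDual_comp_iff.1 (Tuple.monotone_sort (OrderDual.toDual ∘ e))⟩
  have hcard : Fintype.card {i // e (σ i) ≠ 0} ≤ 2 := by
    calc _ = Fintype.card {j // e j ≠ 0} := Fintype.card_congr (σ.subtypeEquiv fun _ => Iff.rfl)
      _ = A.rank := hA.isHermitian.rank_eq_card_non_zero_eigs.symm
      _ ≤ 2 := hrank
  have hvanish (i : Fin n) (hi : 2 ≤ (i : ℕ)) : e (σ i) = 0 :=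
    Fin.eq_zero_of_antitone_of_card_ne_zero_le (f := e ∘ σ) hanti
      (fun _ => hA.eigenvalues_nonneg _) hcard hi
  set i₀ : Fin n := ⟨0, by omega⟩
  set i₁ : Fin n := ⟨1, by omega⟩
  have hi₀₁ : i₀ ≠ i₁ := by simp [i₀, i₁, Fin.ext_iff]
  have hsum_pair (g : ℝ → ℝ) (hg : g 0 = 0) : ∑ i, g (e i) = g (e (σ i₀)) + g (e (σ i₁)) := by
    rw [← Equiv.sum_comp σ]
    refine Fintype.sum_eq_add _ _ hi₀₁ fun i hi => ?_
    rw [hvanish i (by simp only [ne_eq, Fin.ext_iff, i₀, i₁] at hi; omega), hg]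
  have hsum : e (σ i₀) + e (σ i₁) = 1 := by
    have h := hsum_pair id rfl
    simp only [id] at h
    rw [← h]
    exact_mod_cast hA.isHermitian.trace_eq_sum_eigenvalues.symm.trans htr
  have hsq : e (σ i₀) ^ 2 + e (σ i₁) ^ 2 = 1 - 2 * R := by
    rw [← hsum_pair (· ^ 2) (by simp)]
    exact_mod_cast hA.isHermitian.trace_mul_self_eq_sum_sq_eigenvalues.symm.trans htr2
  obtain ⟨hdisc, hdisc', hx, hy⟩ := eq_roots_of_add_eq_one_of_sq_add_sq hsum hsq
    (hA.eigenvalues_nonneg _) (hanti (by simp [i₀, i₁, Fin.le_def]))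
  refine ⟨hdisc, hdisc', σ, fun i => ?_⟩
  split_ifs with h₀ h₁
  · rwa [show i = i₀ from Fin.ext h₀]
  · rwa [show i = i₁ from Fin.ext h₁]
  · exact hvanish i (by omega)
theorem eps_zero_sq (n i : ℕ) (hi : i ≤ n) :
    eps (n + 1) 1 1 i 0 ^ 2 = (i + 1) / (n + 2) := by
  have heps : eps (n + 1) 1 1 i 0 =
      n.choose i / √(n.choose i * (n + 1).choose (i + 1) * ((n + 1 : ℝ)⁻¹ + 1)) := by
    rw [eps, Finset.sum_eq_single_of_mem 0 (by rw [Finset.mem_Icc]; omega)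
      (fun s hs _ => by rw [Finset.mem_Icc] at hs; omega)]
    simp [epsBeta, Cb, Finset.sum_range_succ, show n + 1 + 1 - 2 = n by omega,
      show (0 : ℤ) ≤ i + 1 by omega]
  have hc : (0 : ℝ) < n.choose i := mod_cast Nat.choose_pos hi
  have hc' : (0 : ℝ) < (n + 1).choose (i + 1) := mod_cast Nat.choose_pos (by omega)
  have habsorb : ((n + 1 : ℕ) : ℝ) * n.choose i = (n + 1).choose (i + 1) * (i + 1) :=
    mod_cast Nat.add_one_mul_choose_eq n i
  rw [heps, div_pow, Real.sq_sqrt (by positivity)]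
  field_simp
  push_cast at habsorb
  linear_combination (n + 2 : ℝ) * habsorb

theorem eps_one_sq (n i : ℕ) (hi : i ≤ n) :
    eps (n + 1) 1 1 i 1 ^ 2 = (n + 1 - i) / (n + 2) := by
  have heps : eps (n + 1) 1 1 i 1 =
      -(n.choose i / √(n.choose i * (n + 1).choose i * ((n + 1 : ℝ)⁻¹ + 1))) := by
    rw [eps, Finset.sum_eq_single_of_mem 1 (by rw [Finset.mem_Icc]; omega)
      (fun s hs _ => by rw [Finset.mem_Icc] at hs; omega)]
    simp [epsBeta, Cb, Finset.sum_range_succ, show n + 1 + 1 - 2 = n by omega, neg_div]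
  have hc : (0 : ℝ) < n.choose i := mod_cast Nat.choose_pos hi
  have hc' : (0 : ℝ) < (n + 1).choose i := mod_cast Nat.choose_pos (by omega)
  have habsorb : (n.choose i : ℝ) * (n + 1) = (n + 1).choose i * ((n + 1 - i : ℕ) : ℝ) :=
    mod_cast Nat.choose_mul_succ_eq n i
  rw [heps, neg_sq, div_pow, Real.sq_sqrt (by positivity)]
  field_simp
  push_cast [Nat.cast_sub (by omega : i ≤ n + 1)] at habsorb
  linear_combination (n + 2 : ℝ) * habsorb

theorem eps_zero_sq_add_eps_one_sq (n i : ℕ) (hi : i ≤ n) :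
    eps (n + 1) 1 1 i 0 ^ 2 + eps (n + 1) 1 1 i 1 ^ 2 = 1 := by
  rw [eps_zero_sq n i hi, eps_one_sq n i hi]
  field_simp
  ring

theorem kraus_one_one_zero (m : ℕ) :
    kraus m 1 1 0 = shiftedDiagonal 1 fun i => (eps m 1 1 i 0 : ℂ) := by
  ext l i
  have hi := i.isLt
  simp only [kraus, shiftedDiagonal, of_apply]
  congr 1
  apply propext
  omega

theorem kraus_one_one_one {m : ℕ} (hm : 1 ≤ m) :
    kraus m 1 1 1 = shiftedDiagonal 0 fun i => (eps m 1 1 i 1 : ℂ) := by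
  ext l i
  have hi := i.isLt
  simp only [kraus, shiftedDiagonal, of_apply]
  congr 1
  apply propext
  omega

theorem kraus_one_one_completeness {m : ℕ} (hm : 1 ≤ m) :
    (kraus m 1 1 0)ᴴ * kraus m 1 1 0 + (kraus m 1 1 1)ᴴ * kraus m 1 1 1 = 1 := by
  rw [kraus_one_one_zero, kraus_one_one_one hm, conjTranspose_shiftedDiagonal_mul_self (by omega),
    conjTranspose_shiftedDiagonal_mul_self (by omega), diagonal_add, ← diagonal_one]
  congr 1
  funext i
  obtain ⟨n, rfl⟩ := Nat.exists_eq_add_of_le' hm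
  have hi : (i : ℕ) ≤ n := by omega
  simp only [RCLike.star_def, Complex.conj_ofReal]
  exact_mod_cast by simpa only [sq] using eps_zero_sq_add_eps_one_sq n i hi

theorem mul_pureState_mul_conjTranspose {d e : ℕ} (T : Matrix (Fin e) (Fin d) ℂ)
    (w : EuclideanSpace ℂ (Fin d)) :
    T * pureState w * Tᴴ = vecMulVec (T *ᵥ fun i => w i) (star (T *ᵥ fun i => w i)) := by
  rw [show pureState w = vecMulVec (fun i => w i) (star fun i => w i) from rfl, mul_vecMulVec,
    vecMulVec_mul, star_mulVec]

section EposicOneOne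

variable (m : ℕ) (w : EuclideanSpace ℂ (Fin (m + 1 - 2 * 1 + 1)))

local notation "u₀" => kraus m 1 1 0 *ᵥ fun i => w i
local notation "u₁" => kraus m 1 1 1 *ᵥ fun i => w i

theorem eposic_one_one_pureState :
    eposic m 1 1 (pureState w) = vecMulVec u₀ (star u₀) + vecMulVec u₁ (star u₁) := by
  simp only [eposic, Finset.sum_range_succ, Finset.sum_range_zero, zero_add,
    mul_pureState_mul_conjTranspose]

theorem ofReal_Rval :
    (Rval m w : ℂ) = (star u₀ ⬝ᵥ u₀) * (star u₁ ⬝ᵥ u₁) - (star u₀ ⬝ᵥ u₁) * (star u₁ ⬝ᵥ u₀) := by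
  rw [star_dotProduct_self_eq_sum_normSq, star_dotProduct_self_eq_sum_normSq, star_dotProduct u₁,
    RCLike.star_def, Complex.mul_conj, Rval]
  push_cast
  rfl

theorem kraus_one_one_norm_sq_add_norm_sq (hm : 1 ≤ m) (hw : ‖w‖ = 1) :
    star u₀ ⬝ᵥ u₀ + star u₁ ⬝ᵥ u₁ = 1 := by
  rw [star_mulVec_dotProduct_mulVec, star_mulVec_dotProduct_mulVec, ← dotProduct_add, ← add_mulVec,
    kraus_one_one_completeness hm, one_mulVec, EuclideanSpace.star_dotProduct_self_of_norm_eq_one hw]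

end EposicOneOne

theorem stmt10 (m : ℕ) (hm : 1 ≤ m)
    (w : EuclideanSpace ℂ (Fin (m + 1 - 2 * 1 + 1))) (hw : ‖w‖ = 1) :
    0 ≤ 1 - 4 * Rval m w ∧ 1 - 4 * Rval m w ≤ 1 ∧
    ∃ hM : (eposic m 1 1 (pureState w)).IsHermitian,
      ∃ σ : Equiv.Perm (Fin (m + 1)),
        ∀ i : Fin (m + 1), hM.eigenvalues (σ i) =
          if (i : ℕ) = 0 then (1 + Real.sqrt (1 - 4 * Rval m w)) / 2
          else if (i : ℕ) = 1 then (1 - Real.sqrt (1 - 4 * Rval m w)) / 2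
          else 0 := by
  set u₀ := kraus m 1 1 0 *ᵥ fun i => w i
  set u₁ := kraus m 1 1 1 *ᵥ fun i => w i
  have hnorm : star u₀ ⬝ᵥ u₀ + star u₁ ⬝ᵥ u₁ = 1 := kraus_one_one_norm_sq_add_norm_sq m w hm hw
  set ρ := vecMulVec u₀ (star u₀) + vecMulVec u₁ (star u₁) with hρ
  have hPSD : ρ.PosSemidef :=
    (posSemidef_vecMulVec_self_star u₀).add (posSemidef_vecMulVec_self_star u₁)
  have htr : ρ.trace = 1 := by
    rw [hρ, trace_add, trace_vecMulVec, trace_vecMulVec, dotProduct_comm u₀, dotProduct_comm u₁,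
      hnorm]
  have htr2 : (ρ * ρ).trace = ((1 - 2 * Rval m w : ℝ) : ℂ) := by
    rw [hρ, trace_vecMulVec_add_vecMulVec_sq, Complex.ofReal_sub, Complex.ofReal_mul, ofReal_Rval]
    push_cast
    linear_combination (star u₀ ⬝ᵥ u₀ + star u₁ ⬝ᵥ u₁ + 1) * hnorm
  obtain ⟨hdisc, hdisc', σ, hσ⟩ := hPSD.eigenvalues_of_rank_le_two (by omega)
    (rank_vecMulVec_add_vecMulVec_le _ _ _ _) htr htr2
  rw [eposic_one_one_pureState]
  exact ⟨hdisc, hdisc', hPSD.isHermitian, σ, hσ⟩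
end
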